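/- Let π₁ and π₂ be probability measures on measurable spaces (X₁, ℱ₁) and (X₂, ℱ₂). For each N ∈ ℕ, let (x¹_{N,i}, w̄¹_{N,i})_{i=1}^{N} and (x²_{N,j}, w̄²_{N,j})_{j=1}^{N} be two random weighted particle systems on a common probability space, taking values in X₁ and X₂ respectively, such that the weights are nonnegative and sum to one (Σ_i w̄¹_{N,i} = 1 and Σ_j w̄²_{N,j} = 1 almost surely), the two systems are independent of each other for each N, and for every A ∈ ℱ₁ the random variable Σ_{i=1}^{N} w̄¹_{N,i} 1_A(x¹_{N,i}) converges in probability to π₁(A) as N → ∞, and likewise for every A ∈ ℱ₂, Σ_{j=1}^{N} w̄²_{N,j} 1_A(x²_{N,j}) converges in probability to π₂(A). Then for every bounded ℱ₁ ⊗ ℱ₂-measurable function f : X₁ × X₂ → ℝ, the random variable Σ_{i=1}^{N} Σ_{j=1}^{N} w̄¹_{N,i} w̄²_{N,j} f(x¹_{N,i}, x²_{N,j}) converges in probability to ∫ f d(π₁ ⊗ π₂) as N → ∞. -/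

import Mathlib

/-!
Put `φ a = ∫ f (a, ·) dπ₂` and `Dₙ(a) = ∑ⱼ w²ⱼ f(a, x²ⱼ) - φ(a)`, so that the double sum is
`∑ᵢ w¹ᵢ φ(x¹ᵢ) + ∑ᵢ w¹ᵢ Dₙ(x¹ᵢ)`. Consistency on indicators extends, by uniform approximation with
simple functions, to all bounded measurable functions; hence the first sum tends to
`∫ φ dπ₁ = ∫ f d(π₁ ⊗ π₂)`, and for each fixed `a` the bounded variables `Dₙ(a)` tend to `0` in
probability, hence in `L¹`: `ψₙ(a) = E|Dₙ(a)| → 0`. Independence of the two populations gives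
`E|∑ᵢ w¹ᵢ Dₙ(x¹ᵢ)| ≤ E ∑ᵢ w¹ᵢ ψₙ(x¹ᵢ)`, and the right side tends to `0` because the expected
weighted sums of the first population converge to `π₁`-integrals of bounded functions.
-/

open MeasureTheory ProbabilityTheory Filter
open scoped Topology ENNReal

namespace MeasureTheory

section TendstoInMeasure

variable {α ι E : Type*} {m : MeasurableSpace α} {μ : Measure α} {l : Filter ι}
  [SeminormedAddCommGroup E]

theorem tendstoInMeasure_const (g : α → E) : TendstoInMeasure μ (fun _ : ι => g) l g := by
  intro ε hε
  simp [not_le.mpr hε, tendsto_const_nhds]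

theorem TendstoInMeasure.add {f f' : ι → α → E} {g g' : α → E}
    (hf : TendstoInMeasure μ f l g) (hf' : TendstoInMeasure μ f' l g') :
    TendstoInMeasure μ (fun i a => f i a + f' i a) l (fun a => g a + g' a) := by
  rw [tendstoInMeasure_iff_norm] at *
  intro ε hε
  refine tendsto_of_tendsto_of_tendsto_of_le_of_le tendsto_const_nhds
    (by simpa using (hf _ (half_pos hε)).add (hf' _ (half_pos hε))) (fun _ => zero_le)
    (fun i => (measure_mono fun a ha => ?_).trans (measure_union_le _ _))
  by_contra! h
  simp only [Set.mem_union, Set.mem_ofPred_eq, not_or, not_le] at h ha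
  have := norm_add_le (f i a - g a) (f' i a - g' a)
  rw [add_sub_add_comm] at ha
  linarith

theorem TendstoInMeasure.const_smul {𝕜 : Type*} [NormedField 𝕜] [NormedSpace 𝕜 E] (c : 𝕜)
    {f : ι → α → E} {g : α → E} (hf : TendstoInMeasure μ f l g) :
    TendstoInMeasure μ (fun i a => c • f i a) l (fun a => c • g a) := by
  rw [tendstoInMeasure_iff_norm] at *
  intro ε hε
  refine tendsto_of_tendsto_of_tendsto_of_le_of_le tendsto_const_nhds
    (hf (ε / (‖c‖ + 1)) (by positivity)) (fun _ => zero_le)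
    (fun i => measure_mono fun a ha => ?_)
  simp only [Set.mem_ofPred_eq, ← smul_sub, norm_smul] at ha ⊢
  rw [div_le_iff₀ (by positivity)]
  nlinarith [norm_nonneg (f i a - g a), norm_nonneg c]

theorem tendstoInMeasure_finsetSum {κ : Type*} (s : Finset κ) {f : κ → ι → α → E}
    {g : κ → α → E} (hf : ∀ k ∈ s, TendstoInMeasure μ (f k) l (g k)) :
    TendstoInMeasure μ (fun i a => ∑ k ∈ s, f k i a) l (fun a => ∑ k ∈ s, g k a) := by
  classical
  induction s using Finset.induction_on with
  | empty => exact tendstoInMeasure_const (fun _ => 0)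
  | insert k s hk ih =>
    simp only [Finset.sum_insert hk]
    exact (hf k (s.mem_insert_self k)).add (ih fun k' hk' => hf k' (s.mem_insert_of_mem hk'))

theorem tendstoInMeasure_of_forall_dist_le {f : ι → α → E} {g : α → E}
    (h : ∀ δ > 0, ∃ (f' : ι → α → E) (g' : α → E), TendstoInMeasure μ f' l g' ∧
      (∀ i, ∀ᵐ a ∂μ, dist (f i a) (f' i a) ≤ δ) ∧ ∀ᵐ a ∂μ, dist (g a) (g' a) ≤ δ) :
    TendstoInMeasure μ f l g := by
  rw [tendstoInMeasure_iff_dist]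
  intro ε hε
  obtain ⟨f', g', hf', hff', hgg'⟩ := h (ε / 3) (by positivity)
  refine tendsto_of_tendsto_of_tendsto_of_le_of_le tendsto_const_nhds
    (tendstoInMeasure_iff_dist.mp hf' (ε / 3) (by positivity)) (fun _ => zero_le)
    (fun i => measure_mono_ae ?_)
  filter_upwards [hff' i, hgg'] with a h₁ h₂ (ha : ε ≤ dist (f i a) (g a))
  show ε / 3 ≤ dist (f' i a) (g' a)
  have := dist_triangle4 (f i a) (f' i a) (g' a) (g a)
  rw [dist_comm (g' a)] at this
  linarith

end TendstoInMeasure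

section Integral

variable {α ι E : Type*} {m : MeasurableSpace α} {μ : Measure α} [NormedAddCommGroup E]

theorem unifIntegrable_of_ae_norm_le {p : ℝ≥0∞} (hp : 1 ≤ p) (hp' : p ≠ ∞) {f : ι → α → E}
    (hf : ∀ i, AEStronglyMeasurable (f i) μ) {K : ℝ} (hK : ∀ i, ∀ᵐ a ∂μ, ‖f i a‖ ≤ K) :
    UnifIntegrable f p μ := by
  refine unifIntegrable_of hp hp' hf fun ε hε => ⟨K.toNNReal + 1, fun i => ?_⟩
  have hnull : {a | K.toNNReal + 1 ≤ ‖f i a‖₊}.indicator (f i) =ᵐ[μ] 0 := by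
    filter_upwards [hK i] with a ha
    refine Set.indicator_of_notMem (fun h => ?_) _
    have h' : (K.toNNReal : ℝ) + 1 ≤ ‖f i a‖ := by exact_mod_cast h
    linarith [K.le_coe_toNNReal]
  simp [eLpNorm_congr_ae hnull]

theorem tendsto_integral_norm_sub_of_tendstoInMeasure [IsFiniteMeasure μ] {f : ℕ → α → E}
    {g : α → E} (hf : ∀ n, AEStronglyMeasurable (f n) μ) {K : ℝ}
    (hK : ∀ n, ∀ᵐ a ∂μ, ‖f n a‖ ≤ K) (hg : Integrable g μ)
    (hfg : TendstoInMeasure μ f atTop g) :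
    Tendsto (fun n => ∫ a, ‖f n a - g a‖ ∂μ) atTop (𝓝 0) := by
  have hL1 := tendsto_Lp_finite_of_tendstoInMeasure le_rfl ENNReal.one_ne_top hf
    (memLp_one_iff_integrable.2 hg)
    (unifIntegrable_of_ae_norm_le le_rfl ENNReal.one_ne_top hf hK) hfg
  refine ((ENNReal.tendsto_toReal ENNReal.zero_ne_top).comp hL1).congr fun n => ?_
  rw [Function.comp_apply, eLpNorm_one_eq_lintegral_enorm]
  exact (integral_norm_eq_lintegral_enorm ((hf n).sub hg.aestronglyMeasurable)).symm

theorem tendsto_integral_of_tendstoInMeasure [NormedSpace ℝ E] [IsFiniteMeasure μ]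
    {f : ℕ → α → E} {g : α → E} (hf : ∀ n, AEStronglyMeasurable (f n) μ) {K : ℝ}
    (hK : ∀ n, ∀ᵐ a ∂μ, ‖f n a‖ ≤ K) (hg : Integrable g μ)
    (hfg : TendstoInMeasure μ f atTop g) :
    Tendsto (fun n => ∫ a, f n a ∂μ) atTop (𝓝 (∫ a, g a ∂μ)) := by
  refine tendsto_iff_norm_sub_tendsto_zero.2 <|
    squeeze_zero (fun _ => norm_nonneg _) (fun n => ?_)
      (tendsto_integral_norm_sub_of_tendstoInMeasure hf hK hg hfg)
  rw [← integral_sub (Integrable.of_bound (hf n) K (hK n)) hg]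
  exact norm_integral_le_integral_norm _

theorem tendstoInMeasure_of_tendsto_integral_norm_sub {l : Filter ι} {f : ι → α → E}
    {g : α → E} (hf : ∀ i, Integrable (f i) μ) (hg : Integrable g μ)
    (hfg : Tendsto (fun i => ∫ a, ‖f i a - g a‖ ∂μ) l (𝓝 0)) :
    TendstoInMeasure μ f l g := by
  refine tendstoInMeasure_of_tendsto_eLpNorm one_ne_zero (fun i => (hf i).aestronglyMeasurable)
    hg.aestronglyMeasurable ?_
  have hL1 := ENNReal.tendsto_ofReal hfg
  rw [ENNReal.ofReal_zero] at hL1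
  refine hL1.congr fun i => ?_
  rw [eLpNorm_one_eq_lintegral_enorm]
  exact ofReal_integral_norm_eq_lintegral_enorm ((hf i).sub hg)

end Integral

theorem SimpleFunc.exists_forall_abs_sub_le {X : Type*} [MeasurableSpace X] {g : X → ℝ}
    (hg : Measurable g) {C : ℝ} (hgC : ∀ a, |g a| ≤ C) {δ : ℝ} (hδ : 0 < δ) :
    ∃ s : SimpleFunc X ℝ, ∀ a, |g a - s a| ≤ δ := by
  let t : SimpleFunc X ℤ :=
    { toFun := fun a => ⌊g a / δ⌋
      measurableSet_fiber' := fun k => (hg.div_const δ).floor (measurableSet_singleton k)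
      finite_range' := (Set.finite_Icc ⌊-C / δ⌋ ⌊C / δ⌋).subset <| by
        rintro _ ⟨a, rfl⟩
        have := abs_le.1 (hgC a)
        exact ⟨Int.floor_mono (by gcongr; exact this.1),
          Int.floor_mono (by gcongr; exact this.2)⟩ }
  refine ⟨t.map fun k : ℤ => δ * k, fun a => ?_⟩
  have h₁ := Int.floor_le (g a / δ)
  have h₂ := Int.lt_floor_add_one (g a / δ)
  have hga : g a = δ * (g a / δ) := (mul_div_cancel₀ _ hδ.ne').symm
  simp only [SimpleFunc.map_apply]
  change |g a - δ * ⌊g a / δ⌋| ≤ δ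
  rw [abs_le]
  constructor <;> nlinarith

end MeasureTheory

theorem ProbabilityTheory.IndepFun.integral_comp_eq_integral_integral {Ω α β : Type*}
    [MeasurableSpace Ω] [MeasurableSpace α] [MeasurableSpace β] {P : Measure Ω} [IsFiniteMeasure P]
    {Y : Ω → α} {Z : Ω → β} (hYZ : IndepFun Y Z P) (hY : Measurable Y) (hZ : Measurable Z)
    {G : α × β → ℝ} (hG : Measurable G) (hGi : Integrable (fun ω => G (Y ω, Z ω)) P) :
    ∫ ω, G (Y ω, Z ω) ∂P = ∫ ω, ∫ ω', G (Y ω, Z ω') ∂P ∂P := by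
  have hlaw := hYZ.map_prod_eq_prod_map_map hY.aemeasurable hZ.aemeasurable
  have hGi' : Integrable G ((P.map Y).prod (P.map Z)) := by
    rw [← hlaw]
    exact (integrable_map_measure hG.aestronglyMeasurable (hY.prodMk hZ).aemeasurable).2 hGi
  rw [← integral_map (hY.prodMk hZ).aemeasurable hG.aestronglyMeasurable, hlaw,
    integral_prod G hGi', integral_map hY.aemeasurable
      (hG.stronglyMeasurable.integral_prod_right' (ν := P.map Z)).aestronglyMeasurable]
  congr with ω
  exact integral_map hZ.aemeasurable (hG.comp measurable_prodMk_left).aestronglyMeasurable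

theorem abs_integral_le_of_ae_abs_le {α : Type*} [MeasurableSpace α] {μ : Measure α}
    [IsProbabilityMeasure μ] {g : α → ℝ} {C : ℝ} (hg : ∀ᵐ a ∂μ, |g a| ≤ C) :
    |∫ a, g a ∂μ| ≤ C := by
  simpa using norm_integral_le_of_norm_le_const (f := g) hg

theorem abs_sum_mul_le_of_mem_stdSimplex {ι : Type*} [Fintype ι] {w g : ι → ℝ}
    (hw : w ∈ stdSimplex ℝ ι) {C : ℝ} (hg : ∀ i, |g i| ≤ C) : |∑ i, w i * g i| ≤ C :=
  calc |∑ i, w i * g i| ≤ ∑ i, |w i * g i| := Finset.abs_sum_le_sum_abs _ _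
    _ ≤ ∑ i, w i * C := by
      gcongr with i
      rw [abs_mul, abs_of_nonneg (hw.1 i)]
      exact mul_le_mul_of_nonneg_left (hg i) (hw.1 i)
    _ = C := by rw [← Finset.sum_mul, hw.2, one_mul]

theorem ae_abs_weighted_sum_le {Ω X ι : Type*} [MeasurableSpace Ω] {P : Measure Ω} [Fintype ι]
    {x : ι → Ω → X} {w : ι → Ω → ℝ}
    (hsimplex : ∀ᵐ ω ∂P, (fun i => w i ω) ∈ stdSimplex ℝ ι) {g : X → ℝ} {C : ℝ}
    (hgC : ∀ a, |g a| ≤ C) : ∀ᵐ ω ∂P, |∑ i, w i ω * g (x i ω)| ≤ C := by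
  filter_upwards [hsimplex] with ω hω using abs_sum_mul_le_of_mem_stdSimplex hω fun i => hgC _

section WeightedSum

variable {Ω X : Type*} [MeasurableSpace Ω] [MeasurableSpace X] {P : Measure Ω}

theorem integrable_weighted_sum [IsFiniteMeasure P] {ι : Type*} [Fintype ι] {x : ι → Ω → X}
    {w : ι → Ω → ℝ} (hx : ∀ i, Measurable (x i)) (hw : ∀ i, Measurable (w i))
    (hsimplex : ∀ᵐ ω ∂P, (fun i => w i ω) ∈ stdSimplex ℝ ι) {g : X → ℝ} (hg : Measurable g)
    {C : ℝ} (hgC : ∀ a, |g a| ≤ C) : Integrable (fun ω => ∑ i, w i ω * g (x i ω)) P :=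
  .of_bound (by fun_prop) C (ae_abs_weighted_sum_le hsimplex hgC)

theorem integral_abs_weighted_sum_le_of_indepFun [IsProbabilityMeasure P] {ι β : Type*}
    [Fintype ι] [MeasurableSpace β] {x : ι → Ω → X} {w : ι → Ω → ℝ} {Z : Ω → β}
    (hx : ∀ i, Measurable (x i)) (hw : ∀ i, Measurable (w i)) (hZ : Measurable Z)
    (hsimplex : ∀ᵐ ω ∂P, (fun i => w i ω) ∈ stdSimplex ℝ ι)
    (hind : IndepFun (fun ω i => (x i ω, w i ω)) Z P) {D : X × β → ℝ} (hD : Measurable D)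
    {K : ℝ} (hDK : ∀ᵐ ω ∂P, ∀ a, |D (a, Z ω)| ≤ K) :
    ∫ ω, |∑ i, w i ω * D (x i ω, Z ω)| ∂P ≤
      ∫ ω, ∑ i, w i ω * ∫ ω', |D (x i ω, Z ω')| ∂P ∂P := by
  let G : (ι → X × ℝ) × β → ℝ := fun q => ∑ i, (q.1 i).2 * |D ((q.1 i).1, q.2)|
  have hG : Measurable G := by fun_prop
  have hY : Measurable fun ω i => (x i ω, w i ω) := by fun_prop
  have hGi : Integrable (fun ω => G (fun i => (x i ω, w i ω), Z ω)) P := by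
    refine .of_bound (hG.comp (hY.prodMk hZ)).aestronglyMeasurable K ?_
    filter_upwards [hsimplex, hDK] with ω hω hωK
    exact abs_sum_mul_le_of_mem_stdSimplex hω fun i => (abs_abs _).trans_le (hωK _)
  have hDi : ∀ a, Integrable (fun ω' => |D (a, Z ω')|) P := fun a =>
    .of_bound (by fun_prop : Measurable fun ω' => |D (a, Z ω')|).aestronglyMeasurable K
      (by filter_upwards [hDK] with ω hω using (abs_abs _).trans_le (hω a))
  calc ∫ ω, |∑ i, w i ω * D (x i ω, Z ω)| ∂P
      ≤ ∫ ω, G (fun i => (x i ω, w i ω), Z ω) ∂P := by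
        refine integral_mono_ae ?_ hGi ?_
        · refine .of_bound (by fun_prop : Measurable _).aestronglyMeasurable K ?_
          filter_upwards [hsimplex, hDK] with ω hω hωK
          exact (abs_abs _).trans_le (abs_sum_mul_le_of_mem_stdSimplex hω fun i => hωK _)
        · filter_upwards [hsimplex] with ω hω
          refine (Finset.abs_sum_le_sum_abs _ _).trans_eq (Finset.sum_congr rfl fun i _ => ?_)
          rw [abs_mul, abs_of_nonneg (hω.1 i)]
    _ = ∫ ω, ∫ ω', G (fun i => (x i ω, w i ω), Z ω') ∂P ∂P :=
        hind.integral_comp_eq_integral_integral hY hZ hG hGi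
    _ = ∫ ω, ∑ i, w i ω * ∫ ω', |D (x i ω, Z ω')| ∂P ∂P := by
        congr with ω
        rw [integral_finsetSum _ fun i _ => (hDi _).const_mul _]
        simp_rw [integral_const_mul]

end WeightedSum

section ParticleSystem

variable {Ω X : Type*} [MeasurableSpace Ω] [MeasurableSpace X] {P : Measure Ω} {π : Measure X}
  {x : (N : ℕ) → Fin N → Ω → X} {w : (N : ℕ) → Fin N → Ω → ℝ}

def ConsistentFor (P : Measure Ω) (π : Measure X) (x : (N : ℕ) → Fin N → Ω → X)
    (w : (N : ℕ) → Fin N → Ω → ℝ) : Prop :=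
  ∀ A : Set X, MeasurableSet A → TendstoInMeasure P
    (fun N ω => ∑ i, w N i ω * A.indicator (fun _ => (1 : ℝ)) (x N i ω)) atTop
    (fun _ => (π A).toReal)

namespace ConsistentFor

theorem tendstoInMeasure_simpleFunc [IsFiniteMeasure π] (hcons : ConsistentFor P π x w)
    (s : SimpleFunc X ℝ) :
    TendstoInMeasure P (fun N ω => ∑ i, w N i ω * s (x N i ω)) atTop
      (fun _ => ∫ a, s a ∂π) := by
  have hs : ∀ a, s a = ∑ y ∈ s.range, y * (s ⁻¹' {y}).indicator (fun _ => (1 : ℝ)) a := by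
    intro a
    rw [Finset.sum_eq_single (s a) (fun y _ hy => by simp [Ne.symm hy])
      (fun h => absurd (s.mem_range_self a) h)]
    simp
  refine (tendstoInMeasure_finsetSum s.range fun y _ =>
    (hcons _ (s.measurableSet_fiber y)).const_smul y).congr
    (fun N => ae_of_all _ fun ω => ?_) (ae_of_all _ fun _ => ?_)
  · simp only [smul_eq_mul, Finset.mul_sum]
    rw [Finset.sum_comm]
    refine Finset.sum_congr rfl fun i _ => ?_
    rw [hs (x N i ω), Finset.mul_sum]
    exact Finset.sum_congr rfl fun y _ => by ring
  · rw [← SimpleFunc.integral_eq_integral s (s.integrable_of_isFiniteMeasure),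
      SimpleFunc.integral_eq]
    simp [measureReal_def, mul_comm]

theorem tendstoInMeasure [IsProbabilityMeasure π] (hcons : ConsistentFor P π x w)
    (hsimplex : ∀ N, ∀ᵐ ω ∂P, (fun i => w N i ω) ∈ stdSimplex ℝ (Fin N)) {g : X → ℝ}
    (hg : Measurable g) {C : ℝ} (hgC : ∀ a, |g a| ≤ C) :
    TendstoInMeasure P (fun N ω => ∑ i, w N i ω * g (x N i ω)) atTop
      (fun _ => ∫ a, g a ∂π) := by
  refine tendstoInMeasure_of_forall_dist_le fun δ hδ => ?_
  obtain ⟨s, hs⟩ := SimpleFunc.exists_forall_abs_sub_le hg hgC hδ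
  refine ⟨_, _, hcons.tendstoInMeasure_simpleFunc s, fun N => ?_, ae_of_all _ fun _ => ?_⟩
  · filter_upwards [hsimplex N] with ω hω
    rw [Real.dist_eq, ← Finset.sum_sub_distrib]
    simp_rw [← mul_sub]
    exact abs_sum_mul_le_of_mem_stdSimplex hω fun i => hs _
  · have hgi : Integrable g π := .of_bound hg.aestronglyMeasurable C (ae_of_all _ hgC)
    rw [Real.dist_eq, ← integral_sub hgi (s.integrable_of_isFiniteMeasure)]
    exact abs_integral_le_of_ae_abs_le (ae_of_all _ hs)

theorem tendsto_integral_abs_sub [IsProbabilityMeasure π] [IsFiniteMeasure P]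
    (hcons : ConsistentFor P π x w) (hx : ∀ N i, Measurable (x N i))
    (hw : ∀ N i, Measurable (w N i))
    (hsimplex : ∀ N, ∀ᵐ ω ∂P, (fun i => w N i ω) ∈ stdSimplex ℝ (Fin N)) {g : X → ℝ}
    (hg : Measurable g) {C : ℝ} (hgC : ∀ a, |g a| ≤ C) :
    Tendsto (fun N => ∫ ω, |∑ i, w N i ω * g (x N i ω) - ∫ a, g a ∂π| ∂P) atTop (𝓝 0) :=
  tendsto_integral_norm_sub_of_tendstoInMeasure (fun N => by fun_prop) (K := C)
    (fun N => ae_abs_weighted_sum_le (hsimplex N) hgC)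
    (integrable_const _) (hcons.tendstoInMeasure hsimplex hg hgC)

theorem tendsto_integral [IsProbabilityMeasure π] [IsProbabilityMeasure P]
    (hcons : ConsistentFor P π x w) (hx : ∀ N i, Measurable (x N i))
    (hw : ∀ N i, Measurable (w N i))
    (hsimplex : ∀ N, ∀ᵐ ω ∂P, (fun i => w N i ω) ∈ stdSimplex ℝ (Fin N)) {g : X → ℝ}
    (hg : Measurable g) {C : ℝ} (hgC : ∀ a, |g a| ≤ C) :
    Tendsto (fun N => ∫ ω, ∑ i, w N i ω * g (x N i ω) ∂P) atTop (𝓝 (∫ a, g a ∂π)) := by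
  simpa using tendsto_integral_of_tendstoInMeasure (fun N => by fun_prop) (K := C)
    (fun N => ae_abs_weighted_sum_le (hsimplex N) hgC)
    (integrable_const _) (hcons.tendstoInMeasure hsimplex hg hgC)

theorem tendsto_integral_of_tendsto_zero [IsProbabilityMeasure π] [IsProbabilityMeasure P]
    (hcons : ConsistentFor P π x w) (hx : ∀ N i, Measurable (x N i))
    (hw : ∀ N i, Measurable (w N i))
    (hsimplex : ∀ N, ∀ᵐ ω ∂P, (fun i => w N i ω) ∈ stdSimplex ℝ (Fin N)) {ψ : ℕ → X → ℝ}
    (hψ : ∀ N, Measurable (ψ N)) {M : ℝ} (hψM : ∀ N a, 0 ≤ ψ N a ∧ ψ N a ≤ M)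
    (hψ0 : ∀ a, Tendsto (ψ · a) atTop (𝓝 0)) :
    Tendsto (fun N => ∫ ω, ∑ i, w N i ω * ψ N (x N i ω) ∂P) atTop (𝓝 0) := by
  -- The measures `E ∑ᵢ wᵢ δ_{xᵢ}` vary with `N`, so dominated convergence does not apply
  -- directly; instead `ψ N` is bounded, for `N ≥ k`, by the tail supremum `Ψ k`, which
  -- decreases to `0` and whose expected weighted sums converge to `∫ Ψ k dπ`.
  set Ψ : ℕ → X → ℝ := fun k a => ⨆ m, ψ (k + m) a
  have hbdd : ∀ k a, BddAbove (Set.range fun m => ψ (k + m) a) :=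
    fun k a => ⟨M, by rintro _ ⟨m, rfl⟩; exact (hψM _ _).2⟩
  have hψΨ : ∀ k N, k ≤ N → ∀ a, ψ N a ≤ Ψ k a := by
    intro k N hkN a
    obtain ⟨m, rfl⟩ := Nat.exists_eq_add_of_le hkN
    exact le_ciSup (hbdd k a) m
  have hΨM : ∀ k a, 0 ≤ Ψ k a ∧ Ψ k a ≤ M :=
    fun k a => ⟨(hψM k a).1.trans (hψΨ k k le_rfl a), ciSup_le fun m => (hψM _ _).2⟩
  have hΨ : ∀ k, Measurable (Ψ k) := fun k => Measurable.iSup fun m => hψ (k + m)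
  have hΨ0 : ∀ a, Tendsto (Ψ · a) atTop (𝓝 0) := by
    intro a
    refine tendsto_order.2 ⟨fun ε hε => .of_forall fun k => hε.trans_le (hΨM k a).1,
      fun ε hε => ?_⟩
    obtain ⟨K, hK⟩ := eventually_atTop.1 ((hψ0 a).eventually (gt_mem_nhds (half_pos hε)))
    filter_upwards [eventually_ge_atTop K] with k hk
    exact (ciSup_le fun m => (hK _ (by omega)).le).trans_lt (half_lt_self hε)
  have hintΨ : Tendsto (fun k => ∫ a, Ψ k a ∂π) atTop (𝓝 0) := by
    simpa using tendsto_integral_of_dominated_convergence (fun _ => M)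
      (fun k => (hΨ k).aestronglyMeasurable) (integrable_const M)
      (fun k => ae_of_all _ fun a => (abs_of_nonneg (hΨM k a).1).trans_le (hΨM k a).2)
      (ae_of_all _ hΨ0)
  refine tendsto_order.2 ⟨fun ε hε => .of_forall fun N => hε.trans_le ?_, fun ε hε => ?_⟩
  · refine integral_nonneg_of_ae ?_
    filter_upwards [hsimplex N] with ω hω
    exact Finset.sum_nonneg fun i _ => mul_nonneg (hω.1 i) (hψM _ _).1
  obtain ⟨k, hk⟩ := (hintΨ.eventually (gt_mem_nhds hε)).exists
  have hlimk := hcons.tendsto_integral hx hw hsimplex (hΨ k)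
    (fun a => (abs_of_nonneg (hΨM k a).1).trans_le (hΨM k a).2)
  filter_upwards [hlimk.eventually (gt_mem_nhds hk), eventually_ge_atTop k] with N hN hkN
  refine lt_of_le_of_lt (integral_mono_ae ?_ ?_ ?_) hN
  · exact integrable_weighted_sum (hx N) (hw N) (hsimplex N) (hψ N)
      (fun a => (abs_of_nonneg (hψM N a).1).trans_le (hψM N a).2)
  · exact integrable_weighted_sum (hx N) (hw N) (hsimplex N) (hΨ k)
      (fun a => (abs_of_nonneg (hΨM k a).1).trans_le (hΨM k a).2)
  · filter_upwards [hsimplex N] with ω hω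
    exact Finset.sum_le_sum fun i _ => mul_le_mul_of_nonneg_left (hψΨ k N hkN _) (hω.1 i)

end ConsistentFor
end ParticleSystem

section Merge

variable {Ω X₁ X₂ : Type*} [MeasurableSpace Ω] [MeasurableSpace X₁] [MeasurableSpace X₂]
  {P : Measure Ω} [IsProbabilityMeasure P] {π₁ : Measure X₁} {π₂ : Measure X₂}
  [IsProbabilityMeasure π₁] [IsProbabilityMeasure π₂]
  {x1 : (N : ℕ) → Fin N → Ω → X₁} {w1 : (N : ℕ) → Fin N → Ω → ℝ}
  {x2 : (N : ℕ) → Fin N → Ω → X₂} {w2 : (N : ℕ) → Fin N → Ω → ℝ}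

theorem tendstoInMeasure_sum_deviation_of_indepFun (hcons1 : ConsistentFor P π₁ x1 w1)
    (hx1 : ∀ N i, Measurable (x1 N i)) (hw1 : ∀ N i, Measurable (w1 N i))
    (hsimplex1 : ∀ N, ∀ᵐ ω ∂P, (fun i => w1 N i ω) ∈ stdSimplex ℝ (Fin N))
    (hcons2 : ConsistentFor P π₂ x2 w2)
    (hx2 : ∀ N j, Measurable (x2 N j)) (hw2 : ∀ N j, Measurable (w2 N j))
    (hsimplex2 : ∀ N, ∀ᵐ ω ∂P, (fun j => w2 N j ω) ∈ stdSimplex ℝ (Fin N))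
    (hindep : ∀ N, IndepFun (fun ω i => (x1 N i ω, w1 N i ω)) (fun ω j => (x2 N j ω, w2 N j ω)) P)
    {f : X₁ × X₂ → ℝ} (hf : Measurable f) {C : ℝ} (hfC : ∀ p, |f p| ≤ C) :
    TendstoInMeasure P (fun N ω => ∑ i, w1 N i ω *
      (∑ j, w2 N j ω * f (x1 N i ω, x2 N j ω) - ∫ b, f (x1 N i ω, b) ∂π₂)) atTop 0 := by
  set φ : X₁ → ℝ := fun a => ∫ b, f (a, b) ∂π₂
  change TendstoInMeasure P (fun N ω => ∑ i, w1 N i ω *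
    (∑ j, w2 N j ω * f (x1 N i ω, x2 N j ω) - φ (x1 N i ω))) atTop 0
  have hφ : Measurable φ := hf.stronglyMeasurable.integral_prod_right'.measurable
  have hDK : ∀ N, ∀ᵐ ω ∂P, ∀ a, |∑ j, w2 N j ω * f (a, x2 N j ω) - φ a| ≤ 2 * C := fun N => by
    filter_upwards [hsimplex2 N] with ω hω a
    have h₁ := abs_sum_mul_le_of_mem_stdSimplex hω fun j => hfC (a, x2 N j ω)
    have h₂ := abs_integral_le_of_ae_abs_le (μ := π₂) (ae_of_all _ fun b => hfC (a, b))
    linarith [abs_sub (∑ j, w2 N j ω * f (a, x2 N j ω)) (φ a)]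
  set ψ : ℕ → X₁ → ℝ := fun N a => ∫ ω, |∑ j, w2 N j ω * f (a, x2 N j ω) - φ a| ∂P
  have hψ : ∀ N, Measurable (ψ N) := fun N =>
    (by fun_prop : Measurable fun q : X₁ × Ω => |∑ j, w2 N j q.2 * f (q.1, x2 N j q.2) - φ q.1|)
      |>.stronglyMeasurable.integral_prod_right'.measurable
  have hψM : ∀ N a, 0 ≤ ψ N a ∧ ψ N a ≤ 2 * C := fun N a =>
    ⟨integral_nonneg fun _ => abs_nonneg _, (le_abs_self _).trans <| abs_integral_le_of_ae_abs_le <|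
      by filter_upwards [hDK N] with ω hω using (abs_abs _).trans_le (hω a)⟩
  have hψ0 : ∀ a, Tendsto (ψ · a) atTop (𝓝 0) := fun a =>
    hcons2.tendsto_integral_abs_sub (π := π₂) hx2 hw2 hsimplex2 (g := fun b => f (a, b))
      (hf.comp measurable_prodMk_left) fun b => hfC (a, b)
  refine tendstoInMeasure_of_tendsto_integral_norm_sub (fun N => ?_) (integrable_zero _ _ _) ?_
  · refine .of_bound (by fun_prop : Measurable _).aestronglyMeasurable (2 * C) ?_
    filter_upwards [hsimplex1 N, hDK N] with ω h₁ h₂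
    exact abs_sum_mul_le_of_mem_stdSimplex h₁ fun i => h₂ _
  refine squeeze_zero (fun N => integral_nonneg fun _ => norm_nonneg _) (fun N => ?_)
    (hcons1.tendsto_integral_of_tendsto_zero hx1 hw1 hsimplex1 hψ hψM hψ0)
  simpa using integral_abs_weighted_sum_le_of_indepFun
    (D := fun q : X₁ × (Fin N → X₂ × ℝ) => ∑ j, (q.2 j).2 * f (q.1, (q.2 j).1) - φ q.1)
    (hx1 N) (hw1 N) (by fun_prop) (hsimplex1 N) (hindep N) (by fun_prop) (hDK N)

end Merge

/-- (Merge step of the D&C SMC consistency argument.) Let `π₁`, `π₂` be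
probability measures. For each `N`, let `(x1 N i, w1 N i)_{i}` and `(x2 N j, w2 N j)_{j}` be
two random weighted particle systems of size `N` (particles in `X₁` resp. `X₂`, weights
nonnegative and summing to one almost surely), independent of each other for each `N`, and
each consistent for `π₁` resp. `π₂` in the sense that weighted indicator sums of any
measurable set converge in probability to its measure. Then for every bounded
product-measurable `f : X₁ × X₂ → ℝ`, the double weighted sums
`∑ᵢ ∑ⱼ w1 N i · w2 N j · f (x1 N i, x2 N j)` converge in probability to `∫ f d(π₁ ⊗ π₂)`. -/
theorem product_particle_system_consistent
    {X₁ X₂ : Type*} [MeasurableSpace X₁] [MeasurableSpace X₂]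
    (π₁ : Measure X₁) (π₂ : Measure X₂)
    [IsProbabilityMeasure π₁] [IsProbabilityMeasure π₂]
    {Ω : Type*} [MeasurableSpace Ω] (P : Measure Ω) [IsProbabilityMeasure P]
    (x1 : (N : ℕ) → Fin N → Ω → X₁) (w1 : (N : ℕ) → Fin N → Ω → ℝ)
    (x2 : (N : ℕ) → Fin N → Ω → X₂) (w2 : (N : ℕ) → Fin N → Ω → ℝ)
    (hx1 : ∀ N i, Measurable (x1 N i)) (hw1 : ∀ N i, Measurable (w1 N i))
    (hx2 : ∀ N j, Measurable (x2 N j)) (hw2 : ∀ N j, Measurable (w2 N j))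
    (hw1_sum : ∀ N, ∀ᵐ ω ∂P, (∀ i, 0 ≤ w1 N i ω) ∧ ∑ i, w1 N i ω = 1)
    (hw2_sum : ∀ N, ∀ᵐ ω ∂P, (∀ j, 0 ≤ w2 N j ω) ∧ ∑ j, w2 N j ω = 1)
    (hindep : ∀ N, IndepFun
      (fun ω => (fun i : Fin N => (x1 N i ω, w1 N i ω)))
      (fun ω => (fun j : Fin N => (x2 N j ω, w2 N j ω))) P)
    (hcons1 : ∀ A : Set X₁, MeasurableSet A →
      TendstoInMeasure P
        (fun N ω => ∑ i, w1 N i ω * Set.indicator A (fun _ => (1 : ℝ)) (x1 N i ω))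
        atTop (fun _ => (π₁ A).toReal))
    (hcons2 : ∀ A : Set X₂, MeasurableSet A →
      TendstoInMeasure P
        (fun N ω => ∑ j, w2 N j ω * Set.indicator A (fun _ => (1 : ℝ)) (x2 N j ω))
        atTop (fun _ => (π₂ A).toReal))
    (f : X₁ × X₂ → ℝ) (hf_meas : Measurable f) (C : ℝ) (hf_bdd : ∀ p, |f p| ≤ C) :
    TendstoInMeasure P
      (fun N ω => ∑ i, ∑ j, w1 N i ω * w2 N j ω * f (x1 N i ω, x2 N j ω))
      atTop (fun _ => ∫ p, f p ∂(π₁.prod π₂)) := by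
  have hφC : ∀ a, |∫ b, f (a, b) ∂π₂| ≤ C := fun a =>
    abs_integral_le_of_ae_abs_le (ae_of_all _ fun b => hf_bdd (a, b))
  have hT := tendstoInMeasure_sum_deviation_of_indepFun hcons1 hx1 hw1 hw1_sum hcons2 hx2 hw2
    hw2_sum hindep hf_meas hf_bdd
  have hU := ConsistentFor.tendstoInMeasure hcons1 hw1_sum
    hf_meas.stronglyMeasurable.integral_prod_right'.measurable hφC
  refine (hT.add hU).congr (fun N => ae_of_all _ fun ω => ?_) (ae_of_all _ fun _ => ?_)
  · simp only [mul_sub, Finset.mul_sum, ← Finset.sum_add_distrib, sub_add_cancel, mul_assoc]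
  · simp [integral_prod f (.of_bound hf_meas.aestronglyMeasurable C (ae_of_all _ hf_bdd))]
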